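/- arXiv:2503.16700 — 4 statements merged into one kernel-verified Lean document; each statement's English description precedes it below -/
import Mathlib

section
/- Suppose β > 0, ε > 0, and Q₁, Q₂ : S×A → ℝ satisfy L₁(Q₁) ≤ ε and L₂(Q₂) ≤ ε, where L₁, L₂ are the AGT2 expected loss functions. Then ‖Q₁ − Q*‖∞ ≤ √(ε·|S|·|A|)/(1−γ) + (γ/(1−γ))·√(2ε·|S|·|A|/β). -/
/-!
`T Q₂ s a - Q₁ s a` is the `P(· | s, a)`-average of the temporal-difference errors whose mean
square is the `(s, a)` term of `|S| |A| L₁`, so Jensen's inequality bounds it by `√(ε |S| |A|)`;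
likewise `L₂` gives `|Q₁ - Q₂| ≤ √(2 ε |S| |A| / β)` pointwise. Writing `Q* = T Q*` and using that
`T` is a `γ`-contraction,
`‖Q₁ - Q*‖ ≤ √(ε |S| |A|) + γ ‖Q₂ - Q*‖ ≤ √(ε |S| |A|) + γ (√(2 ε |S| |A| / β) + ‖Q₁ - Q*‖)`,
and solving for `‖Q₁ - Q*‖` gives the bound.
-/

open Finset

/-- Maximum of `Q s' a'` over actions `a'`. -/
noncomputable def maxQ {S A : Type*} [Fintype A] [Nonempty A]
    (Q : S → A → ℝ) (s' : S) : ℝ :=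
  univ.sup' univ_nonempty (fun a' => Q s' a')

/-- The Bellman optimality operator. -/
noncomputable def bellmanT {S A : Type*} [Fintype S] [Fintype A] [Nonempty A]
    (P r : S → A → S → ℝ) (γ : ℝ) (Q : S → A → ℝ) : S → A → ℝ :=
  fun s a => ∑ s', P s a s' * (r s a s' + γ * maxQ Q s')

/-- Sup norm on `ℝ^{S×A}`. -/
noncomputable def supNorm {S A : Type*} [Fintype S] [Fintype A] [Nonempty S] [Nonempty A]
    (Q : S → A → ℝ) : ℝ :=
  univ.sup' univ_nonempty (fun p : S × A => |Q p.1 p.2|)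

/-- AGT2 expected loss `L₁`. -/
noncomputable def agt2L1 {S A : Type*} [Fintype S] [Fintype A] [Nonempty A]
    (P r : S → A → S → ℝ) (γ : ℝ) (Q₁ Q₂ : S → A → ℝ) : ℝ :=
  (1 / ((Fintype.card S : ℝ) * (Fintype.card A : ℝ))) *
    ∑ p : S × A, ∑ s', P p.1 p.2 s' *
      (r p.1 p.2 s' + γ * maxQ Q₂ s' - Q₁ p.1 p.2) ^ 2

/-- AGT2 expected loss `L₂`. -/
noncomputable def agt2L2 {S A : Type*} [Fintype S] [Fintype A]
    (β : ℝ) (Q₁ Q₂ : S → A → ℝ) : ℝ :=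
  (1 / ((Fintype.card S : ℝ) * (Fintype.card A : ℝ))) *
    ∑ p : S × A, (β / 2) * (Q₁ p.1 p.2 - Q₂ p.1 p.2) ^ 2

theorem Finset.sup'_le_sup'_add {ι α : Type*} [AddCommGroup α] [LinearOrder α]
    [IsOrderedAddMonoid α] {s : Finset ι} (H : s.Nonempty) {f g : ι → α} {c : α}
    (h : ∀ i ∈ s, f i ≤ g i + c) : s.sup' H f ≤ s.sup' H g + c :=
  sup'_le _ _ fun i hi => (h i hi).trans (add_le_add_left (le_sup' g hi) c)

theorem Finset.abs_sup'_sub_sup'_le {ι α : Type*} [AddCommGroup α] [LinearOrder α]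
    [IsOrderedAddMonoid α] {s : Finset ι} (H : s.Nonempty) {f g : ι → α} {c : α}
    (h : ∀ i ∈ s, |f i - g i| ≤ c) : |s.sup' H f - s.sup' H g| ≤ c := by
  rw [abs_sub_le_iff, sub_le_iff_le_add', sub_le_iff_le_add']
  exact ⟨sup'_le_sup'_add H fun i hi => sub_le_iff_le_add'.1 (abs_sub_le_iff.1 (h i hi)).1,
    sup'_le_sup'_add H fun i hi => sub_le_iff_le_add'.1 (abs_sub_le_iff.1 (h i hi)).2⟩

theorem abs_sum_mul_le_of_abs_le {ι : Type*} (t : Finset ι) {w x : ι → ℝ} {c : ℝ}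
    (hw0 : ∀ i ∈ t, 0 ≤ w i) (hw1 : ∑ i ∈ t, w i = 1) (hx : ∀ i ∈ t, |x i| ≤ c) :
    |∑ i ∈ t, w i * x i| ≤ c :=
  calc |∑ i ∈ t, w i * x i|
      ≤ ∑ i ∈ t, w i * |x i| := by
        refine (abs_sum_le_sum_abs _ _).trans (sum_le_sum fun i hi => ?_)
        rw [abs_mul, abs_of_nonneg (hw0 i hi)]
    _ ≤ ∑ i ∈ t, w i * c := sum_le_sum fun i hi => mul_le_mul_of_nonneg_left (hx i hi) (hw0 i hi)
    _ = c := by rw [← sum_mul, hw1, one_mul]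

theorem sq_sum_mul_le_sum_mul_sq {ι : Type*} (t : Finset ι) {w x : ι → ℝ}
    (hw0 : ∀ i ∈ t, 0 ≤ w i) (hw1 : ∑ i ∈ t, w i = 1) :
    (∑ i ∈ t, w i * x i) ^ 2 ≤ ∑ i ∈ t, w i * x i ^ 2 := by
  simpa only [smul_eq_mul] using
    (even_two.convexOn_pow (𝕜 := ℝ)).map_sum_le hw0 hw1 fun i _ => Set.mem_univ (x i)

theorem le_mul_of_one_div_mul_sum_le {ι : Type*} [Fintype ι] {f : ι → ℝ} {c ε : ℝ}
    (hf : ∀ i, 0 ≤ f i) (hc : 0 < c) (h : 1 / c * ∑ i, f i ≤ ε) (i : ι) : f i ≤ ε * c :=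
  calc f i ≤ ∑ j, f j := single_le_sum (fun j _ => hf j) (mem_univ i)
    _ ≤ c * ε := by rwa [one_div, inv_mul_le_iff₀ hc] at h
    _ = ε * c := mul_comm c ε

section SupNorm

variable {S A : Type*} [Fintype S] [Fintype A] [Nonempty S] [Nonempty A]

theorem abs_le_supNorm (Q : S → A → ℝ) (s : S) (a : A) : |Q s a| ≤ supNorm Q :=
  le_sup' (fun p : S × A => |Q p.1 p.2|) (mem_univ (s, a))

theorem supNorm_le {Q : S → A → ℝ} {c : ℝ} (h : ∀ s a, |Q s a| ≤ c) : supNorm Q ≤ c :=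
  sup'_le _ _ fun p _ => h p.1 p.2

theorem supNorm_sub_le_add (Q Q' Q'' : S → A → ℝ) :
    supNorm (fun s a => Q s a - Q'' s a) ≤
      supNorm (fun s a => Q s a - Q' s a) + supNorm (fun s a => Q' s a - Q'' s a) :=
  supNorm_le fun s a => (abs_sub_le _ _ _).trans <|
    add_le_add (abs_le_supNorm (fun s a => Q s a - Q' s a) s a)
      (abs_le_supNorm (fun s a => Q' s a - Q'' s a) s a)

theorem abs_maxQ_sub_maxQ_le (Q Q' : S → A → ℝ) (s : S) :
    |maxQ Q s - maxQ Q' s| ≤ supNorm (fun s a => Q s a - Q' s a) :=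
  abs_sup'_sub_sup'_le _ fun a _ => abs_le_supNorm (fun s a => Q s a - Q' s a) s a

end SupNorm

section Bellman

variable {S A : Type*} [Fintype S] [Fintype A] [Nonempty A]
  {P r : S → A → S → ℝ} {γ : ℝ}

theorem bellmanT_sub_bellmanT (Q Q' : S → A → ℝ) (s : S) (a : A) :
    bellmanT P r γ Q s a - bellmanT P r γ Q' s a =
      ∑ s', P s a s' * (γ * (maxQ Q s' - maxQ Q' s')) := by
  simp only [bellmanT, ← sum_sub_distrib]
  exact sum_congr rfl fun s' _ => by ring

theorem bellmanT_sub_eq_sum (hP1 : ∀ s a, ∑ s', P s a s' = 1)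
    (Q : S → A → ℝ) (s : S) (a : A) (c : ℝ) :
    bellmanT P r γ Q s a - c = ∑ s', P s a s' * (r s a s' + γ * maxQ Q s' - c) := by
  simp only [bellmanT, mul_sub, sum_sub_distrib, ← sum_mul, hP1, one_mul]

theorem supNorm_bellmanT_sub_le [Nonempty S] (hγ0 : 0 ≤ γ) (hP0 : ∀ s a s', 0 ≤ P s a s')
    (hP1 : ∀ s a, ∑ s', P s a s' = 1) (Q Q' : S → A → ℝ) :
    supNorm (fun s a => bellmanT P r γ Q s a - bellmanT P r γ Q' s a) ≤
      γ * supNorm (fun s a => Q s a - Q' s a) :=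
  supNorm_le fun s a => by
    rw [bellmanT_sub_bellmanT]
    refine abs_sum_mul_le_of_abs_le _ (fun s' _ => hP0 s a s') (hP1 s a) fun s' _ => ?_
    rw [abs_mul, abs_of_nonneg hγ0]
    exact mul_le_mul_of_nonneg_left (abs_maxQ_sub_maxQ_le Q Q' s') hγ0

theorem abs_bellmanT_sub_le_of_agt2L1_le [Nonempty S] (hP0 : ∀ s a s', 0 ≤ P s a s')
    (hP1 : ∀ s a, ∑ s', P s a s' = 1) {Q₁ Q₂ : S → A → ℝ} {ε : ℝ}
    (h : agt2L1 P r γ Q₁ Q₂ ≤ ε) (s : S) (a : A) :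
    |bellmanT P r γ Q₂ s a - Q₁ s a| ≤
      Real.sqrt (ε * (Fintype.card S : ℝ) * (Fintype.card A : ℝ)) := by
  rw [bellmanT_sub_eq_sum hP1, mul_assoc]
  refine Real.abs_le_sqrt <|
    (sq_sum_mul_le_sum_mul_sq _ (fun s' _ => hP0 s a s') (hP1 s a)).trans ?_
  exact le_mul_of_one_div_mul_sum_le
    (f := fun p : S × A => ∑ s', P p.1 p.2 s' * (r p.1 p.2 s' + γ * maxQ Q₂ s' - Q₁ p.1 p.2) ^ 2)
    (fun p => sum_nonneg fun s' _ => mul_nonneg (hP0 p.1 p.2 s') (sq_nonneg _))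
    (by positivity) h (s, a)

end Bellman

theorem abs_sub_le_of_agt2L2_le {S A : Type*} [Fintype S] [Fintype A] [Nonempty S] [Nonempty A]
    {β ε : ℝ} (hβ : 0 < β) {Q₁ Q₂ : S → A → ℝ} (h : agt2L2 β Q₁ Q₂ ≤ ε) (s : S) (a : A) :
    |Q₁ s a - Q₂ s a| ≤
      Real.sqrt (2 * ε * (Fintype.card S : ℝ) * (Fintype.card A : ℝ) / β) := by
  have hterm := le_mul_of_one_div_mul_sum_le
    (f := fun p : S × A => β / 2 * (Q₁ p.1 p.2 - Q₂ p.1 p.2) ^ 2)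
    (fun p => by positivity) (by positivity) h (s, a)
  refine Real.abs_le_sqrt ?_
  rw [le_div_iff₀ hβ]
  linarith

theorem agt2_dqn_optimality_Q1_general {S A : Type*} [Fintype S] [Fintype A] [Nonempty S] [Nonempty A]
    (P r : S → A → S → ℝ) (γ : ℝ) (hγ0 : 0 ≤ γ) (hγ1 : γ < 1)
    (hP0 : ∀ s a s', 0 ≤ P s a s') (hP1 : ∀ s a, ∑ s', P s a s' = 1)
    (Qstar : S → A → ℝ) (hQstar : bellmanT P r γ Qstar = Qstar)
    (β ε : ℝ) (hβ : 0 < β)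
    (Q₁ Q₂ : S → A → ℝ)
    (hL1 : agt2L1 P r γ Q₁ Q₂ ≤ ε)
    (hL2 : agt2L2 β Q₁ Q₂ ≤ ε) :
    supNorm (fun s a => Q₁ s a - Qstar s a) ≤
      Real.sqrt (ε * (Fintype.card S : ℝ) * (Fintype.card A : ℝ)) / (1 - γ) +
        γ / (1 - γ) *
          Real.sqrt (2 * ε * (Fintype.card S : ℝ) * (Fintype.card A : ℝ) / β) := by
  set δ₁ := Real.sqrt (ε * (Fintype.card S : ℝ) * (Fintype.card A : ℝ))
  set δ₂ := Real.sqrt (2 * ε * (Fintype.card S : ℝ) * (Fintype.card A : ℝ) / β)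
  set e₁ := supNorm (fun s a => Q₁ s a - Qstar s a)
  set e₂ := supNorm (fun s a => Q₂ s a - Qstar s a)
  have he₁ : e₁ ≤ δ₁ + γ * e₂ := by
    refine (supNorm_sub_le_add Q₁ (bellmanT P r γ Q₂) Qstar).trans (add_le_add ?_ ?_)
    · exact supNorm_le fun s a => by
        rw [abs_sub_comm]
        exact abs_bellmanT_sub_le_of_agt2L1_le hP0 hP1 hL1 s a
    · simpa only [hQstar] using supNorm_bellmanT_sub_le (r := r) hγ0 hP0 hP1 Q₂ Qstar
  have he₂ : e₂ ≤ δ₂ + e₁ := by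
    refine (supNorm_sub_le_add Q₂ Q₁ Qstar).trans (add_le_add_left ?_ e₁)
    exact supNorm_le fun s a => by
      rw [abs_sub_comm]
      exact abs_sub_le_of_agt2L2_le hβ hL2 s a
  have hγ : 0 < 1 - γ := sub_pos.2 hγ1
  calc e₁ ≤ (δ₁ + γ * δ₂) / (1 - γ) := by
        rw [le_div_iff₀ hγ]
        linarith [mul_le_mul_of_nonneg_left he₂ hγ0]
    _ = δ₁ / (1 - γ) + γ / (1 - γ) * δ₂ := by ring

theorem agt2_dqn_optimality_Q1 {S A : Type*} [Fintype S] [Fintype A] [Nonempty S] [Nonempty A]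
    (P r : S → A → S → ℝ) (γ : ℝ) (hγ0 : 0 ≤ γ) (hγ1 : γ < 1)
    (hP0 : ∀ s a s', 0 ≤ P s a s') (hP1 : ∀ s a, ∑ s', P s a s' = 1)
    (Qstar : S → A → ℝ) (hQstar : bellmanT P r γ Qstar = Qstar)
    (β ε : ℝ) (hβ : 0 < β) (hε : 0 < ε)
    (Q₁ Q₂ : S → A → ℝ)
    (hL1 : agt2L1 P r γ Q₁ Q₂ ≤ ε)
    (hL2 : agt2L2 β Q₁ Q₂ ≤ ε) :
    supNorm (fun s a => Q₁ s a - Qstar s a) ≤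
      Real.sqrt (ε * (Fintype.card S : ℝ) * (Fintype.card A : ℝ)) / (1 - γ) +
        γ / (1 - γ) *
          Real.sqrt (2 * ε * (Fintype.card S : ℝ) * (Fintype.card A : ℝ) / β) :=
  agt2_dqn_optimality_Q1_general P r γ hγ0 hγ1 hP0 hP1 Qstar hQstar β ε hβ Q₁ Q₂ hL1 hL2
end

section
/- Vector comparison principle: let F̄, F : ℝⁿ → ℝⁿ be globally Lipschitz continuous, with F̄ quasi-monotone increasing and F(v) ≤ F̄(v) componentwise for every v ∈ ℝⁿ. Let x, v : [0,∞) → ℝⁿ be differentiable curves satisfying x'(t) = F̄(x(t)) and v'(t) = F(v(t)) for all t ≥ 0, with v(0) < x(0) componentwise (strict inequality in every coordinate). Then v(t) ≤ x(t) componentwise for all t ≥ 0. -/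
open Filter

/-- A map `F : ℝⁿ → ℝⁿ` is quasi-monotone increasing if for every index `i` and all
`x, y` with `x i = y i` and `x j ≤ y j` for all `j ≠ i`, one has `F x i ≤ F y i`. -/
def QuasiMonotone {n : ℕ} (F : (Fin n → ℝ) → Fin n → ℝ) : Prop :=
  ∀ (i : Fin n) (x y : Fin n → ℝ), x i = y i → (∀ j, j ≠ i → x j ≤ y j) → F x i ≤ F y i

open Set Topology

/-!
Let `m t = ε e^{Lt}` with `L > K₁` and consider the gap `x + m - v`. Where it vanishes in a
coordinate `i` while staying nonnegative in the others, quasi-monotonicity and the Lipschitz bound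
give `F̄ (v t) i ≤ F̄ (x t + m t) i ≤ F̄ (x t) i + K₁ m t`, so the `i`-th gap has derivative at least
`(L - K₁) m t > 0` and cannot become negative. Letting `ε → 0` gives `v ≤ x`.
-/

theorem HasDerivWithinAt.eventually_lt_of_pos {f : ℝ → ℝ} {f' t : ℝ}
    (hf : HasDerivWithinAt f f' (Ioi t) t) (hf' : 0 < f') : ∀ᶠ s in 𝓝[>] t, f t < f s := by
  have hslope := (hasDerivWithinAt_iff_tendsto_slope' self_notMem_Ioi).1 hf
  filter_upwards [hslope.eventually (eventually_gt_nhds hf'), self_mem_nhdsWithin]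
    with s hs hts
  exact (slope_pos_iff_of_le (le_of_lt hts)).1 hs

theorem nonneg_of_hasDerivAt_pos_on_boundary {ι : Type*} [Fintype ι] {g g' : ℝ → ι → ℝ} {a : ℝ}
    (hg : ∀ t, a ≤ t → HasDerivAt g (g' t) t) (ha : 0 ≤ g a)
    (hboundary : ∀ t, a ≤ t → 0 ≤ g t → ∀ i, g t i = 0 → 0 < g' t i) :
    ∀ t, a ≤ t → 0 ≤ g t := by
  intro b hab
  have hclosed : IsClosed (g ⁻¹' Ici 0 ∩ Icc a b) := by
    rw [inter_comm]
    exact ContinuousOn.preimage_isClosed_of_isClosed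
      (fun t ht ↦ (hg t ht.1).continuousAt.continuousWithinAt) isClosed_Icc isClosed_Ici
  have hstep : ∀ t ∈ g ⁻¹' Ici 0 ∩ Ico a b, g ⁻¹' Ici 0 ∈ 𝓝[>] t := by
    rintro t ⟨hgt : 0 ≤ g t, hat, -⟩
    have hcoord : ∀ i, ∀ᶠ s in 𝓝[>] t, 0 ≤ g s i := by
      intro i
      have hgi : HasDerivAt (fun s ↦ g s i) (g' t i) t := hasDerivAt_pi.1 (hg t hat) i
      rcases (hgt i).eq_or_lt with hzero | hpos
      · filter_upwards [hgi.hasDerivWithinAt.eventually_lt_of_pos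
          (hboundary t hat hgt i hzero.symm)] with s hs
        exact hzero.le.trans hs.le
      · exact nhdsWithin_le_nhds (hgi.continuousAt.eventually (eventually_ge_nhds hpos))
    exact eventually_all.2 hcoord
  exact hclosed.Icc_subset_of_forall_mem_nhdsWithin ha hstep ⟨hab, le_rfl⟩

theorem QuasiMonotone.apply_le_add_of_le_add {n : ℕ} {F : (Fin n → ℝ) → Fin n → ℝ} {K : NNReal}
    (hF : QuasiMonotone F) (hFLip : LipschitzWith K F) {u y : Fin n → ℝ} {c : ℝ} {i : Fin n}
    (hc : 0 ≤ c) (hle : ∀ j, u j ≤ y j + c) (heq : u i = y i + c) :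
    F u i ≤ F y i + K * c := by
  have hmono : F u i ≤ F (y + fun _ ↦ c) i := hF i u _ heq fun j _ ↦ hle j
  have hdist : dist (y + fun _ ↦ c) y ≤ c :=
    (dist_pi_le_iff hc).2 fun j ↦ by simp [abs_of_nonneg hc]
  have hlip : dist (F (y + fun _ ↦ c) i) (F y i) ≤ K * c :=
    (dist_le_pi_dist _ _ i).trans ((hFLip.dist_le_mul _ _).trans
      (mul_le_mul_of_nonneg_left hdist K.coe_nonneg))
  linarith [(abs_le.1 (Real.dist_eq _ _ ▸ hlip)).2]

theorem QuasiMonotone.le_add_mul_exp_of_hasDerivAt {n : ℕ} {Fbar F : (Fin n → ℝ) → Fin n → ℝ}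
    {K : NNReal} {L ε : ℝ} (hquasi : QuasiMonotone Fbar) (hFbarLip : LipschitzWith K Fbar)
    (hdom : ∀ v i, F v i ≤ Fbar v i) {x v : ℝ → Fin n → ℝ}
    (hx : ∀ t, 0 ≤ t → HasDerivAt x (Fbar (x t)) t) (hv : ∀ t, 0 ≤ t → HasDerivAt v (F (v t)) t)
    (h0 : ∀ i, v 0 i ≤ x 0 i) (hKL : K < L) (hε : 0 < ε) :
    ∀ t, 0 ≤ t → ∀ i, v t i ≤ x t i + ε * Real.exp (L * t) := by
  set m : ℝ → ℝ := fun t ↦ ε * Real.exp (L * t)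
  have hm : ∀ t, HasDerivAt m (L * m t) t := fun t ↦
    (((hasDerivAt_id t).const_mul L).exp.const_mul ε).congr_deriv (by simp only [m, id]; ring)
  have hgap := nonneg_of_hasDerivAt_pos_on_boundary
    (g := fun t ↦ x t + (fun _ ↦ m t) - v t)
    (g' := fun t ↦ Fbar (x t) + (fun _ ↦ L * m t) - F (v t))
    (fun t ht ↦ ((hx t ht).add (hasDerivAt_pi.2 fun _ ↦ hm t)).sub (hv t ht))
    (fun i ↦ by
      simp only [m, Pi.sub_apply, Pi.add_apply, Pi.zero_apply, sub_nonneg, mul_zero, Real.exp_zero,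
        mul_one]
      linarith [h0 i]) ?_
  · intro t ht i
    simpa [sub_nonneg] using hgap t ht i
  intro t ht hgt i hzero
  have hle : ∀ j, v t j ≤ x t j + m t := fun j ↦ by simpa [sub_nonneg] using hgt j
  have heq : v t i = x t i + m t := by simp only [Pi.sub_apply, Pi.add_apply] at hzero; linarith
  have hm_pos : 0 < m t := by positivity
  have hlip := hquasi.apply_le_add_of_le_add hFbarLip hm_pos.le hle heq
  have hgrowth : K * m t < L * m t := mul_lt_mul_of_pos_right hKL hm_pos
  simp only [Pi.add_apply, Pi.sub_apply]
  linarith [hdom (v t) i]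

theorem vector_comparison_principle_general {n : ℕ}
    (Fbar F : (Fin n → ℝ) → Fin n → ℝ)
    (K₁ : NNReal) (hFbarLip : LipschitzWith K₁ Fbar)
    (hquasi : QuasiMonotone Fbar)
    (hdom : ∀ v : Fin n → ℝ, ∀ i, F v i ≤ Fbar v i)
    (x v : ℝ → Fin n → ℝ)
    (hx : ∀ t : ℝ, 0 ≤ t → HasDerivAt x (Fbar (x t)) t)
    (hv : ∀ t : ℝ, 0 ≤ t → HasDerivAt v (F (v t)) t)
    (h0 : ∀ i, v 0 i < x 0 i) :
    ∀ t : ℝ, 0 ≤ t → ∀ i, v t i ≤ x t i := by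
  intro t ht i
  have hmargin : ∀ ε > 0, v t i ≤ x t i + ε * Real.exp ((K₁ + 1) * t) := fun ε hε ↦
    hquasi.le_add_mul_exp_of_hasDerivAt hFbarLip hdom hx hv (fun j ↦ (h0 j).le)
      (lt_add_one _) hε t ht i
  refine le_of_forall_pos_le_add fun δ hδ ↦ ?_
  have hexp := Real.exp_pos ((K₁ + 1) * t)
  simpa [div_mul_cancel₀ _ hexp.ne'] using hmargin (δ / Real.exp ((K₁ + 1) * t)) (div_pos hδ hexp)

theorem vector_comparison_principle {n : ℕ}
    (Fbar F : (Fin n → ℝ) → Fin n → ℝ)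
    (K₁ K₂ : NNReal) (hFbarLip : LipschitzWith K₁ Fbar) (hFLip : LipschitzWith K₂ F)
    (hquasi : QuasiMonotone Fbar)
    (hdom : ∀ v : Fin n → ℝ, ∀ i, F v i ≤ Fbar v i)
    (x v : ℝ → Fin n → ℝ)
    (hx : ∀ t : ℝ, 0 ≤ t → HasDerivAt x (Fbar (x t)) t)
    (hv : ∀ t : ℝ, 0 ≤ t → HasDerivAt v (F (v t)) t)
    (h0 : ∀ i, v 0 i < x 0 i) :
    ∀ t : ℝ, 0 ≤ t → ∀ i, v t i ≤ x t i :=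
  vector_comparison_principle_general Fbar F K₁ hFbarLip hquasi hdom x v hx hv h0
end

section
/- For any β > 0, the AGT2 upper comparison system is globally attractive at the origin: every differentiable curve x : [0,∞) → ℝ^{S×A} × ℝ^{S×A} satisfying x'(t) = h(x(t)) for all t ≥ 0 converges to 0 (componentwise) as t → ∞. -/
open Finset Filter

/-- The AGT2 upper comparison field on `ℝ^{S×A} × ℝ^{S×A}`, indexed by
`(S × A) ⊕ (S × A)` (the first summand carries `x₁`, the second carries `x₂`). -/
noncomputable def agt2Upper {S A : Type*} [Fintype S] [Fintype A] [Nonempty A]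
    (P : S → A → S → ℝ) (γ β : ℝ) (d : S → A → ℝ)
    (x : (S × A) ⊕ (S × A) → ℝ) : (S × A) ⊕ (S × A) → ℝ :=
  Sum.elim
    (fun p => -(d p.1 p.2) * x (Sum.inl p) +
      γ * d p.1 p.2 * ∑ s', P p.1 p.2 s' *
        (univ.sup' univ_nonempty fun a' => x (Sum.inr (s', a'))))
    (fun p => β * d p.1 p.2 * (x (Sum.inl p) - x (Sum.inr p)))

/-!
With `γ < c < 1`, the weighted sup norm `V = max (‖x₁‖∞, c ‖x₂‖∞)` is a strict Lyapunov
function: at every coordinate attaining `V` (with sign `σ = ±1`), the field pushes that coordinate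
inward at rate at least `ρ V` for some `ρ > 0`, since `|max x₂| ≤ V / c` and `γ / c < 1` in the
first block and `c |x₁| ≤ c V < V` in the second. Although `V` is only Lipschitz along a solution,
this bounds its right Dini derivative by `-ρ V`, and Gronwall's comparison lemma gives
`V(t) ≤ V(0) e^{-ρt}`.
-/

open Set Topology

theorem eventually_lt_add_mul_sub_of_hasDerivAt {g : ℝ → ℝ} {g' t c r : ℝ}
    (hg : HasDerivAt g g' t) (hle : g t ≤ c) (hr : g t = c → g' < r) :
    ∀ᶠ z in 𝓝[>] t, g z < c + r * (z - t) := by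
  rcases hle.lt_or_eq with hlt | heq
  · have hlim : Tendsto (fun z => g z - r * (z - t)) (𝓝 t) (𝓝 (g t)) := by
      simpa using hg.continuousAt.tendsto.sub ((tendsto_id.sub_const t).const_mul r)
    filter_upwards [nhdsWithin_le_nhds (hlim.eventually (gt_mem_nhds hlt))] with z hz
    linarith
  · filter_upwards [hg.hasDerivWithinAt.limsup_slope_le' (lt_irrefl t) (hr heq),
      self_mem_nhdsWithin] with z hz (htz : t < z)
    rw [slope_def_field, div_lt_iff₀ (sub_pos.2 htz)] at hz
    linarith

section SupNorm

variable {ι : Type*} [Fintype ι] [Nonempty ι]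

/-- The right Dini derivative of the sup norm is governed by the coordinates attaining it. -/
theorem eventually_norm_lt_of_hasDerivAt_pi {y : ℝ → ι → ℝ} {y' : ι → ℝ} {t r : ℝ}
    (hy : HasDerivAt y y' t) (hr : ∀ i σ, |σ| = 1 → σ * y t i = ‖y t‖ → σ * y' i < r) :
    ∀ᶠ z in 𝓝[>] t, ‖y z‖ < ‖y t‖ + r * (z - t) := by
  have hsigned : ∀ i σ, |σ| = 1 → ∀ᶠ z in 𝓝[>] t, σ * y z i < ‖y t‖ + r * (z - t) := by
    intro i σ hσ
    refine eventually_lt_add_mul_sub_of_hasDerivAt ((hasDerivAt_pi.1 hy i).const_mul σ) ?_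
      (hr i σ hσ)
    calc σ * y t i ≤ |σ * y t i| := le_abs_self _
      _ = ‖y t i‖ := by rw [abs_mul, hσ, one_mul, Real.norm_eq_abs]
      _ ≤ ‖y t‖ := norm_le_pi_norm (y t) i
  have hcoord : ∀ᶠ z in 𝓝[>] t, ∀ i, ‖y z i‖ < ‖y t‖ + r * (z - t) := by
    refine eventually_all.2 fun i => ?_
    filter_upwards [hsigned i 1 (by simp), hsigned i (-1) (by simp)] with z h₁ h₂
    rw [Real.norm_eq_abs, abs_lt]
    constructor <;> linarith
  filter_upwards [hcoord] with z hz
  obtain ⟨i⟩ := ‹Nonempty ι›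
  exact (pi_norm_lt_iff ((norm_nonneg _).trans_lt (hz i))).2 hz

theorem norm_le_mul_exp_of_active_deriv_le {y y' : ℝ → ι → ℝ} {ρ T : ℝ}
    (hy : ∀ t, 0 ≤ t → HasDerivAt y (y' t) t)
    (hactive : ∀ t, 0 ≤ t → ∀ i σ, |σ| = 1 → σ * y t i = ‖y t‖ → σ * y' t i ≤ -ρ * ‖y t‖)
    (hT : 0 ≤ T) : ‖y T‖ ≤ ‖y 0‖ * Real.exp (-ρ * T) := by
  have hcont : ContinuousOn (fun t => ‖y t‖) (Icc 0 T) := fun t ht =>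
    (hy t ht.1).continuousAt.norm.continuousWithinAt
  have hslope : ∀ t ∈ Ico 0 T, ∀ r, -ρ * ‖y t‖ < r →
      ∃ᶠ z in 𝓝[>] t, (z - t)⁻¹ * (‖y z‖ - ‖y t‖) < r := by
    intro t ht r hr
    have hlt := eventually_norm_lt_of_hasDerivAt_pi (hy t ht.1) fun i σ hσ hi =>
      (hactive t ht.1 i σ hσ hi).trans_lt hr
    refine (hlt.and self_mem_nhdsWithin).frequently.mono ?_
    rintro z ⟨hz, htz : t < z⟩
    rw [inv_mul_lt_iff₀ (sub_pos.2 htz)]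
    linarith
  simpa [gronwallBound_ε0] using le_gronwallBound_of_liminf_deriv_right_le hcont hslope le_rfl
    (fun t _ => (add_zero _).ge) T ⟨hT, le_rfl⟩

theorem tendsto_zero_of_active_deriv_le {y y' : ℝ → ι → ℝ} {ρ : ℝ} (hρ : 0 < ρ)
    (hy : ∀ t, 0 ≤ t → HasDerivAt y (y' t) t)
    (hactive : ∀ t, 0 ≤ t → ∀ i σ, |σ| = 1 → σ * y t i = ‖y t‖ → σ * y' t i ≤ -ρ * ‖y t‖) :
    Tendsto y atTop (𝓝 0) := by
  rw [tendsto_zero_iff_norm_tendsto_zero]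
  have hexp : Tendsto (fun t => ‖y 0‖ * Real.exp (-ρ * t)) atTop (𝓝 0) := by
    simpa [neg_mul] using
      (Real.tendsto_exp_neg_atTop_nhds_zero.comp (tendsto_id.const_mul_atTop hρ)).const_mul ‖y 0‖
  exact squeeze_zero' (.of_forall fun _ => norm_nonneg _)
    ((eventually_ge_atTop 0).mono fun _ => norm_le_mul_exp_of_active_deriv_le hy hactive) hexp

end SupNorm

theorem abs_sup'_le {α R : Type*} [AddCommGroup R] [LinearOrder R] [IsOrderedAddMonoid R]
    {s : Finset α} (hs : s.Nonempty) {f : α → R} {B : R} (hf : ∀ a ∈ s, |f a| ≤ B) :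
    |s.sup' hs f| ≤ B := by
  obtain ⟨a, ha⟩ := hs
  refine abs_le.2 ⟨(abs_le.1 (hf a ha)).1.trans (le_sup' f ha), sup'_le _ _ fun b hb => ?_⟩
  exact (abs_le.1 (hf b hb)).2

theorem abs_sum_mul_le_of_sum_eq_one {ι R : Type*} [CommRing R] [LinearOrder R]
    [IsStrictOrderedRing R] {s : Finset ι} {p u : ι → R} {B : R}
    (hp0 : ∀ i ∈ s, 0 ≤ p i) (hp1 : ∑ i ∈ s, p i = 1) (hu : ∀ i ∈ s, |u i| ≤ B) :
    |∑ i ∈ s, p i * u i| ≤ B :=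
  calc |∑ i ∈ s, p i * u i| ≤ ∑ i ∈ s, p i * |u i| := by
        refine (abs_sum_le_sum_abs _ _).trans_eq (sum_congr rfl fun i hi => ?_)
        rw [abs_mul, abs_of_nonneg (hp0 i hi)]
    _ ≤ ∑ i ∈ s, p i * B := sum_le_sum fun i hi => mul_le_mul_of_nonneg_left (hu i hi) (hp0 i hi)
    _ = B := by rw [← sum_mul, hp1, one_mul]

def agt2Weight {S A : Type*} (c : ℝ) : (S × A) ⊕ (S × A) → ℝ :=
  Sum.elim (fun _ => 1) (fun _ => c)

theorem agt2Upper_weighted_le_neg_mul_norm_of_active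
    {S A : Type*} [Fintype S] [Fintype A] [Nonempty A]
    {P : S → A → S → ℝ} {γ β c ρ : ℝ} {d : S → A → ℝ}
    (hP0 : ∀ s a s', 0 ≤ P s a s') (hP1 : ∀ s a, ∑ s', P s a s' = 1) (hγ : 0 ≤ γ) (hβ : 0 ≤ β)
    (hd : ∀ s a, 0 ≤ d s a) (hc : 0 < c) (hρ₁ : ∀ s a, ρ ≤ d s a * (1 - γ / c))
    (hρ₂ : ∀ s a, ρ ≤ β * d s a * (1 - c)) (x : (S × A) ⊕ (S × A) → ℝ)
    (i : (S × A) ⊕ (S × A)) {σ : ℝ} (hσ : |σ| = 1)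
    (hactive : σ * (agt2Weight c i * x i) = ‖agt2Weight c * x‖) :
    σ * (agt2Weight c i * agt2Upper P γ β d x i) ≤ -ρ * ‖agt2Weight c * x‖ := by
  set V := ‖agt2Weight c * x‖
  have hV : 0 ≤ V := norm_nonneg _
  have hσle : ∀ u, σ * u ≤ |u| := fun u => (le_abs_self _).trans_eq (by rw [abs_mul, hσ, one_mul])
  have hcoord : ∀ j, |agt2Weight c j * x j| ≤ V := fun j =>
    (Real.norm_eq_abs _).symm.trans_le (norm_le_pi_norm (agt2Weight c * x) j)
  have hx₁ : ∀ p, |x (.inl p)| ≤ V := fun p => by simpa [agt2Weight] using hcoord (.inl p)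
  have hx₂ : ∀ p, |x (.inr p)| ≤ V / c := fun p => by
    rw [le_div_iff₀' hc]
    simpa [agt2Weight, abs_mul, abs_of_pos hc] using hcoord (.inr p)
  have hnext : ∀ s a, |∑ s', P s a s' * univ.sup' univ_nonempty fun a' => x (.inr (s', a'))|
      ≤ V / c := fun s a =>
    abs_sum_mul_le_of_sum_eq_one (fun s' _ => hP0 s a s') (hP1 s a)
      fun s' _ => abs_sup'_le _ fun a' _ => hx₂ (s', a')
  rcases i with ⟨s, a⟩ | ⟨s, a⟩
  · simp only [agt2Weight, Sum.elim_inl, one_mul] at hactive ⊢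
    simp only [agt2Upper, Sum.elim_inl]
    have hds := hd s a
    calc σ * (-d s a * x (.inl (s, a)) + γ * d s a * ∑ s', P s a s' *
          univ.sup' univ_nonempty fun a' => x (.inr (s', a')))
        = -d s a * (σ * x (.inl (s, a))) + γ * d s a * (σ * ∑ s', P s a s' *
          univ.sup' univ_nonempty fun a' => x (.inr (s', a'))) := by ring
      _ ≤ -d s a * V + γ * d s a * (V / c) := by
          rw [hactive]; gcongr; exact (hσle _).trans (hnext s a)
      _ = -(d s a * (1 - γ / c)) * V := by ring
      _ ≤ -ρ * V := by gcongr; exact hρ₁ s a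
  · simp only [agt2Weight, Sum.elim_inr] at hactive ⊢
    simp only [agt2Upper, Sum.elim_inr]
    have hds := hd s a
    calc σ * (c * (β * d s a * (x (.inl (s, a)) - x (.inr (s, a)))))
        = β * d s a * (c * (σ * x (.inl (s, a))) - σ * (c * x (.inr (s, a)))) := by ring
      _ ≤ β * d s a * (c * V - V) := by
          rw [hactive]; gcongr; exact (hσle _).trans (hx₁ (s, a))
      _ = -(β * d s a * (1 - c)) * V := by ring
      _ ≤ -ρ * V := by gcongr; exact hρ₂ s a

theorem agt2_upper_system_globally_attractive
    {S A : Type*} [Fintype S] [Fintype A] [Nonempty S] [Nonempty A]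
    (P : S → A → S → ℝ) (γ : ℝ) (hγ0 : 0 ≤ γ) (hγ1 : γ < 1)
    (hP0 : ∀ s a s', 0 ≤ P s a s') (hP1 : ∀ s a, ∑ s', P s a s' = 1)
    (β : ℝ) (hβ : 0 < β)
    (d : S → A → ℝ) (hd : ∀ s a, 0 < d s a)
    (x : ℝ → (S × A) ⊕ (S × A) → ℝ)
    (hx : ∀ t : ℝ, 0 ≤ t → HasDerivAt x (agt2Upper P γ β d (x t)) t) :
    ∀ i, Tendsto (fun t => x t i) atTop (nhds 0) := by
  obtain ⟨c, hγc, hc1⟩ := exists_between hγ1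
  have hc0 : 0 < c := hγ0.trans_lt hγc
  obtain ⟨p₀, hp₀⟩ := Finite.exists_min fun p : S × A =>
    min (d p.1 p.2 * (1 - γ / c)) (β * d p.1 p.2 * (1 - c))
  have hρ : 0 < min (d p₀.1 p₀.2 * (1 - γ / c)) (β * d p₀.1 p₀.2 * (1 - c)) := by
    have hd₀ := hd p₀.1 p₀.2
    exact lt_min (mul_pos hd₀ (sub_pos.2 ((div_lt_one hc0).2 hγc)))
      (mul_pos (mul_pos hβ hd₀) (sub_pos.2 hc1))
  have hw : Tendsto (fun t => agt2Weight c * x t) atTop (𝓝 0) :=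
    tendsto_zero_of_active_deriv_le hρ (fun t ht => (hx t ht).const_mul _)
      fun t _ => agt2Upper_weighted_le_neg_mul_norm_of_active hP0 hP1 hγ0 hβ.le
        (fun s a => (hd s a).le) hc0 (fun s a => (hp₀ (s, a)).trans (min_le_left _ _))
        (fun s a => (hp₀ (s, a)).trans (min_le_right _ _)) (x t)
  intro i
  have hwi : agt2Weight c i ≠ 0 := by cases i <;> simp [agt2Weight, hc0.ne']
  simpa [hwi] using (((continuous_apply i).tendsto 0).comp hw).div_const (agt2Weight c i)
end

section
/- For any β > 0, the AGT2 ODE model is globally attractive at (Q*, Q*): every differentiable curve t ↦ (Qᴬ_t, Qᴮ_t) : [0,∞) → ℝ^{S×A} × ℝ^{S×A} satisfying, for all t ≥ 0 and all (s,a) ∈ S×A, d/dt Qᴬ_t(s,a) = d(s,a)·(Σ_{s'} P(s'|s,a)·(r(s,a,s') + γ·max_{a'} Qᴮ_t(s',a')) − Qᴬ_t(s,a)) and d/dt Qᴮ_t(s,a) = β·d(s,a)·(Qᴬ_t(s,a) − Qᴮ_t(s,a)) converges as t → ∞ to Qᴬ_t → Q* and Qᴮ_t → Q* (componentwise). -/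
/-!
Fix `γ < α < 1` and measure the error by `V = max (‖Qᴬ - Q*‖∞, α ‖Qᴮ - Q*‖∞)`. At a coordinate
realising this maximum, the `Qᴬ`-error `e` moves towards `T Qᴮ - Q* = T Qᴮ - T Q*`, which is at
most `γ ‖Qᴮ - Q*‖∞ ≤ (γ / α) V` in size, and the weighted `Qᴮ`-error `α (Qᴮ - Q*)` moves towards
`α (Qᴬ - Q*)`, of size at most `α V`; in both cases `e e' ≤ -c e²` for a uniform `c > 0`. So `V`,
a maximum of finitely many functions `±e`, has upper right Dini derivative at most `-c V`, and a
comparison argument gives exponential decay of `V`.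
-/

open Finset

open Filter Set Topology Real

section FiniteMax

variable {ι : Type*} [Fintype ι] [Nonempty ι]

theorem eventually_slope_sup'_lt {g : ι → ℝ → ℝ} {g' : ι → ℝ} {x r : ℝ}
    (hg : ∀ i, HasDerivAt (g i) (g' i) x) (hr : ∀ i, (∀ j, g j x ≤ g i x) → g' i < r) :
    ∀ᶠ z in 𝓝[>] x, slope (fun u => univ.sup' univ_nonempty (fun j => g j u)) x z < r := by
  set N : ℝ → ℝ := fun u => univ.sup' univ_nonempty (fun j => g j u)
  have below : ∀ i, ∀ᶠ z in 𝓝[>] x, g i z < N x + r * (z - x) := by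
    intro i
    by_cases hi : ∀ j, g j x ≤ g i x
    · have hNi : N x = g i x :=
        le_antisymm (sup'_le _ _ fun j _ => hi j) (le_sup' (fun j => g j x) (mem_univ i))
      have hslope : ∀ᶠ z in 𝓝[>] x, slope (g i) x z < r :=
        ((hasDerivWithinAt_iff_tendsto_slope' (lt_irrefl x)).1
          (hg i).hasDerivWithinAt).eventually (eventually_lt_nhds (hr i hi))
      filter_upwards [hslope, self_mem_nhdsWithin] with z hz hxz
      rw [slope_def_field, div_lt_iff₀ (sub_pos.2 hxz)] at hz
      linarith
    · obtain ⟨j, hj⟩ := not_forall.1 hi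
      have hlt : g i x < N x + r * (x - x) := by
        rw [sub_self, mul_zero, add_zero]
        exact (not_le.1 hj).trans_le (le_sup' (fun j => g j x) (mem_univ j))
      exact nhdsWithin_le_nhds ((hg i).continuousAt.eventually_lt (by fun_prop) hlt)
  filter_upwards [eventually_all.2 below, self_mem_nhdsWithin] with z hz hxz
  have hNz : N z < N x + r * (z - x) := (sup'_lt_iff _).2 fun i _ => hz i
  rw [slope_def_field, div_lt_iff₀ (sub_pos.2 hxz)]
  linarith

theorem le_mul_exp_of_deriv_le_at_max {g g' : ℝ → ι → ℝ} {c c' K : ℝ}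
    (hg : ∀ i t, 0 ≤ t → HasDerivAt (fun u => g u i) (g' t i) t)
    (hdiss : ∀ t, 0 ≤ t → ∀ i, (∀ j, g t j ≤ g t i) → 0 < g t i → g' t i ≤ -c * g t i)
    (hc' : c' < c) (hK : 0 < K) (hK₀ : ∀ i, g 0 i ≤ K) {t : ℝ} (ht : 0 ≤ t) (i : ι) :
    g t i ≤ K * exp (-(c' * t)) := by
  classical
  set N : ℝ → ℝ := fun u => univ.sup' univ_nonempty (fun j => g u j)
  set B : ℝ → ℝ := fun u => K * exp (-(c' * u))
  have hB : ∀ x, HasDerivAt B (-c' * B x) x := fun x => by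
    have hlin : HasDerivAt (fun u => -(c' * u)) (-c') x := by
      simpa using (hasDerivAt_id x).const_mul (-c')
    exact (hlin.exp.const_mul K).congr_deriv (by ring)
  have hmax : ∀ x, (univ.filter fun i => ∀ j, g x j ≤ g x i).Nonempty := fun x => by
    obtain ⟨i, -, hi⟩ := exists_max_image univ (fun j => g x j) univ_nonempty
    exact ⟨i, mem_filter.2 ⟨mem_univ i, fun j => hi j (mem_univ j)⟩⟩
  -- upper bound for the right Dini derivative of `N`
  set f' : ℝ → ℝ := fun x => (univ.filter fun i => ∀ j, g x j ≤ g x i).sup' (hmax x) (g' x)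
  suffices N t ≤ B t from (le_sup' (fun j => g t j) (mem_univ i)).trans this
  refine image_le_of_liminf_slope_right_lt_deriv_boundary (f' := f')
    (ContinuousOn.finset_sup'_apply _ fun j _ x hx => (hg j x hx.1).continuousAt.continuousWithinAt)
    (fun x hx r hr => (eventually_slope_sup'_lt (fun j => hg j x hx.1) fun j hj =>
      (le_sup' (g' x) (mem_filter.2 ⟨mem_univ j, hj⟩)).trans_lt hr).frequently)
    (by simpa [N, B] using hK₀) hB ?_ ⟨ht, le_rfl⟩
  intro x hx hNB
  have hNpos : 0 < N x := by rw [show N x = B x from hNB]; positivity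
  have hf' : f' x ≤ -c * N x := sup'_le _ _ fun j hj => by
    have hj := (mem_filter.1 hj).2
    have hNj : N x = g x j := le_antisymm (sup'_le _ _ fun k _ => hj k) (le_sup' (g x) (mem_univ j))
    rw [hNj] at hNpos ⊢
    exact hdiss x hx.1 j hj hNpos
  rw [← hNB]
  nlinarith

theorem tendsto_zero_of_mul_deriv_le {E E' : ℝ → ι → ℝ} {c : ℝ} (hc : 0 < c)
    (hE : ∀ i t, 0 ≤ t → HasDerivAt (fun u => E u i) (E' t i) t)
    (hdiss : ∀ t, 0 ≤ t → ∀ i, (∀ j, |E t j| ≤ |E t i|) → E t i * E' t i ≤ -c * E t i ^ 2)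
    (i : ι) : Tendsto (fun t => E t i) atTop (𝓝 0) := by
  -- `max |E t j|` is the maximum of the differentiable family `σ * E t j` over signs `σ`
  set g : ℝ → ι × SignType → ℝ := fun t p => p.2 * E t p.1
  have hg_abs : ∀ t j, g t (j, SignType.sign (E t j)) = |E t j| := fun t j => sign_mul_self _
  have hg_le : ∀ t p, g t p ≤ |E t p.1| := by
    rintro t ⟨j, σ | σ | σ⟩ <;> simp [g, le_abs_self, neg_le_abs]
  set K := ∑ j, |E 0 j| + 1
  have hdecay : ∀ t, 0 ≤ t → |E t i| ≤ K * exp (-(c / 2 * t)) := fun t ht => by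
    rw [← hg_abs]
    refine le_mul_exp_of_deriv_le_at_max (g' := fun t p => p.2 * E' t p.1)
      (fun p t ht => (hE p.1 t ht).const_mul _) ?_ (half_lt_self hc) (by positivity) ?_ ht _
    · rintro t ht ⟨j, σ⟩ hmax hpos
      have hj : ∀ k, |E t k| ≤ |E t j| := fun k =>
        (hg_abs t k).symm.le.trans ((hmax _).trans (hg_le t _))
      have hEE' := hdiss t ht j hj
      rcases σ with _ | _ | _ <;>
        simp only [g, SignType.zero_eq_zero, SignType.neg_eq_neg_one, SignType.pos_eq_one,
          SignType.coe_zero, SignType.coe_neg, SignType.coe_one, zero_mul, one_mul, neg_mul,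
          lt_self_iff_false] at hpos ⊢ <;>
        nlinarith
    · exact fun p => (hg_le 0 p).trans
        ((single_le_sum (fun j _ => abs_nonneg (E 0 j)) (mem_univ p.1)).trans (by simp [K]))
  have hexp : Tendsto (fun t => K * exp (-(c / 2 * t))) atTop (𝓝 0) := by
    simpa using (tendsto_exp_neg_atTop_nhds_zero.comp
      (tendsto_id.const_mul_atTop (half_pos hc))).const_mul K
  exact squeeze_zero_norm' ((eventually_ge_atTop 0).mono hdecay) hexp

end FiniteMax

section Bellman

variable {S A : Type*} [Fintype A] [Nonempty A]

theorem abs_maxQ_sub_le {Q Q' : S → A → ℝ} {s : S} {M : ℝ}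
    (h : ∀ a, |Q s a - Q' s a| ≤ M) : |maxQ Q s - maxQ Q' s| ≤ M := by
  have key : ∀ Q Q' : S → A → ℝ, (∀ a, |Q s a - Q' s a| ≤ M) → maxQ Q s ≤ maxQ Q' s + M :=
    fun Q Q' h => sup'_le _ _ fun a _ => by
      have hQ' : Q' s a ≤ maxQ Q' s := le_sup' (fun a' => Q' s a') (mem_univ a)
      linarith [(abs_le.1 (h a)).2]
  rw [abs_sub_le_iff]
  exact ⟨by linarith [key Q Q' h], by linarith [key Q' Q fun a => abs_sub_comm (Q s a) _ ▸ h a]⟩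

theorem abs_bellmanT_sub_le [Fintype S] {P r : S → A → S → ℝ} {γ : ℝ} (hγ : 0 ≤ γ)
    (hP0 : ∀ s a s', 0 ≤ P s a s') (hP1 : ∀ s a, ∑ s', P s a s' = 1)
    {Q Q' : S → A → ℝ} {M : ℝ} (h : ∀ s a, |Q s a - Q' s a| ≤ M) (s : S) (a : A) :
    |bellmanT P r γ Q s a - bellmanT P r γ Q' s a| ≤ γ * M := by
  calc |bellmanT P r γ Q s a - bellmanT P r γ Q' s a|
      = |∑ s', P s a s' * (γ * (maxQ Q s' - maxQ Q' s'))| := by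
        simp only [bellmanT, ← sum_sub_distrib, ← mul_sub, add_sub_add_left_eq_sub]
    _ ≤ ∑ s', |P s a s' * (γ * (maxQ Q s' - maxQ Q' s'))| := abs_sum_le_sum_abs _ _
    _ ≤ ∑ s', P s a s' * (γ * M) := sum_le_sum fun s' _ => by
        rw [abs_mul, abs_mul, abs_of_nonneg (hP0 s a s'), abs_of_nonneg hγ]
        gcongr
        · exact hP0 s a s'
        · exact abs_maxQ_sub_le fun a' => h s' a'
    _ = γ * M := by rw [← sum_mul, hP1, one_mul]

end Bellman

theorem mul_sub_self_le_of_abs_le {x y ρ : ℝ} (h : |y| ≤ ρ * |x|) :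
    x * (y - x) ≤ -(1 - ρ) * x ^ 2 := by
  have hxy : x * y ≤ |x| * |y| := (le_abs_self _).trans (abs_mul x y).le
  have hsq : |x| * (ρ * |x|) = ρ * x ^ 2 := by rw [← sq_abs x]; ring
  linarith [mul_le_mul_of_nonneg_left h (abs_nonneg x)]

section AGT2

variable {S A : Type*} [Fintype S] [Fintype A] [Nonempty A]

def agt2Error (α : ℝ) (Qstar qa qb : S → A → ℝ) : (S × A) ⊕ (S × A) → ℝ
  | .inl (s, a) => qa s a - Qstar s a
  | .inr (s, a) => α * (qb s a - Qstar s a)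

noncomputable def agt2Drift (P r : S → A → S → ℝ) (γ β α : ℝ) (d qa qb : S → A → ℝ) :
    (S × A) ⊕ (S × A) → ℝ
  | .inl (s, a) => d s a * (bellmanT P r γ qb s a - qa s a)
  | .inr (s, a) => α * (β * d s a * (qa s a - qb s a))

theorem agt2Error_mul_agt2Drift_le {P r : S → A → S → ℝ} {γ β α c : ℝ}
    {d Qstar qa qb : S → A → ℝ} (hγ : 0 ≤ γ)
    (hP0 : ∀ s a s', 0 ≤ P s a s') (hP1 : ∀ s a, ∑ s', P s a s' = 1)
    (hQstar : bellmanT P r γ Qstar = Qstar) (hα : 0 < α) (hβ : 0 ≤ β) (hd : ∀ s a, 0 ≤ d s a)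
    (hc : ∀ s a, c ≤ d s a * (1 - γ / α) ∧ c ≤ β * d s a * (1 - α))
    {i : (S × A) ⊕ (S × A)}
    (hi : ∀ j, |agt2Error α Qstar qa qb j| ≤ |agt2Error α Qstar qa qb i|) :
    agt2Error α Qstar qa qb i * agt2Drift P r γ β α d qa qb i ≤
      -c * agt2Error α Qstar qa qb i ^ 2 := by
  set E := agt2Error α Qstar qa qb
  rcases i with ⟨s, a⟩ | ⟨s, a⟩
  · set x := E (.inl (s, a))
    have hB : ∀ s' a', |qb s' a' - Qstar s' a'| ≤ |x| / α := fun s' a' => by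
      rw [le_div_iff₀ hα, ← abs_of_pos hα, ← abs_mul, mul_comm]
      exact hi (.inr (s', a'))
    have hT := abs_bellmanT_sub_le (r := r) hγ hP0 hP1 hB s a
    rw [hQstar] at hT
    have key := mul_sub_self_le_of_abs_le (x := x) (ρ := γ / α)
      (hT.trans_eq (by ring))
    calc x * agt2Drift P r γ β α d qa qb (.inl (s, a))
        = d s a * (x * (bellmanT P r γ qb s a - Qstar s a - x)) := by
          simp only [x, E, agt2Error, agt2Drift]
          ring
      _ ≤ d s a * (-(1 - γ / α) * x ^ 2) := mul_le_mul_of_nonneg_left key (hd s a)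
      _ ≤ -c * x ^ 2 := by nlinarith [(hc s a).1, sq_nonneg x]
  · set x := E (.inr (s, a))
    have key := mul_sub_self_le_of_abs_le (x := x) (y := α * (qa s a - Qstar s a)) (ρ := α) (by
      rw [abs_mul, abs_of_pos hα]
      exact mul_le_mul_of_nonneg_left (hi (.inl (s, a))) hα.le)
    calc x * agt2Drift P r γ β α d qa qb (.inr (s, a))
        = β * d s a * (x * (α * (qa s a - Qstar s a) - x)) := by
          simp only [x, E, agt2Error, agt2Drift]
          ring
      _ ≤ β * d s a * (-(1 - α) * x ^ 2) :=
          mul_le_mul_of_nonneg_left key (mul_nonneg hβ (hd s a))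
      _ ≤ -c * x ^ 2 := by nlinarith [(hc s a).2, sq_nonneg x]

end AGT2

theorem agt2_ode_globally_attractive
    {S A : Type*} [Fintype S] [Fintype A] [Nonempty S] [Nonempty A]
    (P r : S → A → S → ℝ) (γ : ℝ) (hγ0 : 0 ≤ γ) (hγ1 : γ < 1)
    (hP0 : ∀ s a s', 0 ≤ P s a s') (hP1 : ∀ s a, ∑ s', P s a s' = 1)
    (Qstar : S → A → ℝ) (hQstar : bellmanT P r γ Qstar = Qstar)
    (β : ℝ) (hβ : 0 < β)
    (d : S → A → ℝ) (hd : ∀ s a, 0 < d s a)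
    (QA QB : ℝ → S → A → ℝ)
    (hQA : ∀ (s : S) (a : A), ∀ t : ℝ, 0 ≤ t → HasDerivAt (fun u => QA u s a)
      (d s a * ((∑ s', P s a s' * (r s a s' + γ * maxQ (QB t) s')) - QA t s a)) t)
    (hQB : ∀ (s : S) (a : A), ∀ t : ℝ, 0 ≤ t → HasDerivAt (fun u => QB u s a)
      (β * d s a * (QA t s a - QB t s a)) t) :
    ∀ s a, Tendsto (fun t => QA t s a) atTop (nhds (Qstar s a)) ∧
      Tendsto (fun t => QB t s a) atTop (nhds (Qstar s a)) := by
  set α := (1 + γ) / 2 with hα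
  have hα0 : 0 < α := by linarith
  have hγα : γ < α := by linarith
  have hα1 : α < 1 := by linarith
  set c := univ.inf' univ_nonempty fun p : S × A =>
    min (d p.1 p.2 * (1 - γ / α)) (β * d p.1 p.2 * (1 - α))
  have hc0 : 0 < c := (lt_inf'_iff _).2 fun p _ =>
    lt_min (mul_pos (hd _ _) (sub_pos.2 ((div_lt_one hα0).2 hγα)))
      (mul_pos (mul_pos hβ (hd _ _)) (sub_pos.2 hα1))
  have hc : ∀ s a, c ≤ d s a * (1 - γ / α) ∧ c ≤ β * d s a * (1 - α) := fun s a =>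
    ⟨(inf'_le _ (mem_univ (s, a))).trans (min_le_left _ _),
      (inf'_le _ (mem_univ (s, a))).trans (min_le_right _ _)⟩
  have hlim := tendsto_zero_of_mul_deriv_le (E := fun t => agt2Error α Qstar (QA t) (QB t))
    (E' := fun t => agt2Drift P r γ β α d (QA t) (QB t)) hc0
    (by rintro (⟨s, a⟩ | ⟨s, a⟩) t ht
        exacts [(hQA s a t ht).sub_const _, ((hQB s a t ht).sub_const _).const_mul α])
    fun t _ i hi => agt2Error_mul_agt2Drift_le hγ0 hP0 hP1 hQstar hα0 hβ.le
      (fun s a => (hd s a).le) hc hi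
  intro s a
  constructor
  · simpa [agt2Error] using (hlim (.inl (s, a))).add_const (Qstar s a)
  · simpa [agt2Error, hα0.ne'] using ((hlim (.inr (s, a))).const_mul α⁻¹).add_const (Qstar s a)
end
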